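/- arXiv:2308.02145 — 4 statements merged into one kernel-verified Lean document; each statement's English description precedes it below -/
import Mathlib

section
/- Let f₁,…,fₙ : ℝ^d → ℝ be positive-definite quadratics with a shared Hessian, i.e. fᵢ(x) = ½‖A(x − zᵢ)‖² for a full-rank matrix A ∈ ℝ^{d×d} and points zᵢ ∈ ℝ^d. Then the Pareto set of (f₁,…,fₙ) equals the convex hull of {z₁,…,zₙ}. -/
/-!
A full-rank `A` turns `fᵢ` into `½‖y − wᵢ‖²` with `y = Ax`, `wᵢ = Azᵢ` in Euclidean space, and
the Pareto set is transported along `x ↦ Ax`, as is the convex hull. For squared distances to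
`w₁, …, wₙ`: a point `y` at least as close to every `wᵢ` as `x` lies in the half-space
`{u | ‖y − u‖ ≤ ‖x − u‖}`, which then contains the convex hull; so if `x` is in the hull, `y = x`.
If `x` is outside the hull, its metric projection onto the hull is strictly closer to every `wᵢ`.
-/

/-- `x` is Pareto optimal for the objectives `f`: no `y` weakly improves all
objectives and strictly improves one. -/
def ParetoOptimal {α : Type*} {n : ℕ} (f : Fin n → α → ℝ) (x : α) : Prop :=
  ¬ ∃ y, (∀ i, f i y ≤ f i x) ∧ (∃ i, f i y < f i x)

open Set RealInnerProductSpace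

section Pareto

variable {α β : Type*} {n : ℕ}

theorem paretoOptimal_comp_equiv_iff (e : α ≃ β) (f : Fin n → β → ℝ) (x : α) :
    ParetoOptimal (fun i => f i ∘ e) x ↔ ParetoOptimal f (e x) := by
  simp only [ParetoOptimal, e.exists_congr_left (α := α), Function.comp_apply, e.apply_symm_apply]

theorem paretoOptimal_comp_strictMono_iff {φ : ℝ → ℝ} (hφ : StrictMono φ)
    (f : Fin n → α → ℝ) (x : α) :
    ParetoOptimal (fun i y => φ (f i y)) x ↔ ParetoOptimal f x := by
  simp only [ParetoOptimal, hφ.le_iff_le, hφ.lt_iff_lt]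

end Pareto

section InnerProductSpace

variable {E : Type*} [NormedAddCommGroup E] [InnerProductSpace ℝ E]

theorem convex_setOf_norm_sub_le_norm_sub (x y : E) :
    Convex ℝ {u : E | ‖y - u‖ ≤ ‖x - u‖} := by
  have hset : {u : E | ‖y - u‖ ≤ ‖x - u‖} = {u | ‖y‖ ^ 2 - ‖x‖ ^ 2 ≤ 2 * ⟪y - x, u⟫} := by
    ext u
    rw [mem_ofPred_eq, mem_ofPred_eq, ← sq_le_sq₀ (norm_nonneg _) (norm_nonneg _),
      norm_sub_sq_real, norm_sub_sq_real, inner_sub_left]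
    constructor <;> intro h <;> linarith
  rw [hset]
  exact convex_halfSpace_ge ((2 : ℝ) • innerₗ E (y - x)).isLinear _

theorem norm_sub_lt_norm_sub_of_inner_le_zero {x v u : E} (h : ⟪x - v, u - v⟫ ≤ 0)
    (hxv : x ≠ v) : ‖v - u‖ < ‖x - u‖ := by
  have hpos : 0 < ‖x - v‖ := norm_pos_iff.2 (sub_ne_zero.2 hxv)
  have hexpand : ‖x - u‖ ^ 2 = ‖x - v‖ ^ 2 - 2 * ⟪x - v, u - v⟫ + ‖u - v‖ ^ 2 := by
    rw [show x - u = (x - v) - (u - v) by abel, norm_sub_sq_real]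
  rw [← sq_lt_sq₀ (norm_nonneg _) (norm_nonneg _), hexpand, norm_sub_rev v u]
  nlinarith

/-- The witness is the metric projection of `x` onto `K`. -/
theorem exists_forall_norm_sub_lt_of_notMem {K : Set E} (hne : K.Nonempty) (hcompl : IsComplete K)
    (hconv : Convex ℝ K) {x : E} (hx : x ∉ K) : ∃ v ∈ K, ∀ u ∈ K, ‖v - u‖ < ‖x - u‖ := by
  obtain ⟨v, hvK, hv⟩ := exists_norm_eq_iInf_of_complete_convex hne hcompl hconv x
  have hobtuse := (norm_eq_iInf_iff_real_inner_le_zero hconv hvK).1 hv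
  exact ⟨v, hvK, fun u hu =>
    norm_sub_lt_norm_sub_of_inner_le_zero (hobtuse u hu) fun hxv => hx (hxv ▸ hvK)⟩

variable {n : ℕ} {w : Fin n → E} {x : E}

theorem paretoOptimal_norm_sub_sq_of_mem_convexHull (hx : x ∈ convexHull ℝ (range w)) :
    ParetoOptimal (fun i y => ‖y - w i‖ ^ 2) x := by
  rintro ⟨y, hle, i, hlt⟩
  have hhull : convexHull ℝ (range w) ⊆ {u | ‖y - u‖ ≤ ‖x - u‖} :=
    (convex_setOf_norm_sub_le_norm_sub x y).convexHull_subset_iff.2 <| range_subset_iff.2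
      fun j => (sq_le_sq₀ (norm_nonneg _) (norm_nonneg _)).1 (hle j)
  have hyx : y = x := by simpa [sub_eq_zero] using hhull hx
  exact (hyx ▸ hlt).false

theorem not_paretoOptimal_norm_sub_sq_of_notMem_convexHull (hn : 0 < n)
    (hx : x ∉ convexHull ℝ (range w)) : ¬ ParetoOptimal (fun i y => ‖y - w i‖ ^ 2) x := by
  have hne : (convexHull ℝ (range w)).Nonempty :=
    ⟨w ⟨0, hn⟩, subset_convexHull ℝ _ (mem_range_self _)⟩
  have hcompl : IsComplete (convexHull ℝ (range w)) :=
    ((finite_range w).isCompact_convexHull ℝ).isComplete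
  obtain ⟨v, -, hv⟩ := exists_forall_norm_sub_lt_of_notMem hne hcompl (convex_convexHull ℝ _) hx
  have hcloser : ∀ i, ‖v - w i‖ ^ 2 < ‖x - w i‖ ^ 2 := fun i =>
    pow_lt_pow_left₀ (hv _ (subset_convexHull ℝ _ (mem_range_self i))) (norm_nonneg _) two_ne_zero
  exact fun hpareto => hpareto ⟨v, fun i => (hcloser i).le, ⟨0, hn⟩, hcloser _⟩

theorem paretoOptimal_norm_sub_sq_iff (hn : 0 < n) :
    ParetoOptimal (fun i y => ‖y - w i‖ ^ 2) x ↔ x ∈ convexHull ℝ (range w) :=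
  ⟨fun hpareto => by_contra fun hx =>
    not_paretoOptimal_norm_sub_sq_of_notMem_convexHull hn hx hpareto,
    paretoOptimal_norm_sub_sq_of_mem_convexHull⟩

theorem paretoOptimal_norm_map_sub_sq_iff {V : Type*} [AddCommGroup V] [Module ℝ V]
    (L : V ≃ₗ[ℝ] E) (hn : 0 < n) (z : Fin n → V) (x : V) :
    ParetoOptimal (fun i y => ‖L (y - z i)‖ ^ 2) x ↔ x ∈ convexHull ℝ (range z) := by
  have hobj : (fun i y => ‖L (y - z i)‖ ^ 2) = fun i => (fun y => ‖y - L (z i)‖ ^ 2) ∘ L := by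
    simp only [map_sub]; rfl
  rw [hobj]
  refine (paretoOptimal_comp_equiv_iff L.toEquiv _ x).trans ?_
  rw [LinearEquiv.coe_toEquiv, paretoOptimal_norm_sub_sq_iff hn, range_comp' L z,
    ← LinearEquiv.coe_coe, ← L.toLinearMap.image_convexHull]
  exact L.injective.mem_set_image

end InnerProductSpace

/-- For positive-definite quadratics with a shared Hessian,
`fᵢ(x) = ½‖A(x − zᵢ)‖²` with `A` full rank, the Pareto set is the convex hull
of the centers `z₁, …, zₙ`. -/
theorem pareto_set_eq_convexHull {d n : ℕ} (hn : 0 < n)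
    (A : Matrix (Fin d) (Fin d) ℝ) (hA : A.det ≠ 0)
    (z : Fin n → (Fin d → ℝ))
    (f : Fin n → (Fin d → ℝ) → ℝ)
    (hf : ∀ i x, f i x = (1 / 2) * ∑ j, (A.mulVec (x - z i) j) ^ 2) :
    {x | ParetoOptimal f x} = convexHull ℝ (Set.range z) := by
  let L : (Fin d → ℝ) ≃ₗ[ℝ] EuclideanSpace ℝ (Fin d) :=
    (A.toLinearEquiv' (A.invertibleOfIsUnitDet hA.isUnit)).trans
      (WithLp.linearEquiv 2 ℝ (Fin d → ℝ)).symm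
  have hfL : f = fun i x => (1 / 2 : ℝ) * ‖L (x - z i)‖ ^ 2 := by
    funext i x
    rw [hf, EuclideanSpace.real_norm_sq_eq]
    rfl
  ext x
  rw [mem_ofPred_eq, hfL,
    paretoOptimal_comp_strictMono_iff (strictMono_mul_left_of_pos one_half_pos),
    paretoOptimal_norm_map_sub_sq_iff L hn]
end

section
/- Let U and V be linear subspaces of ℝ^d such that U ∩ V^⊥ = {0}. Then there exists a positive definite linear map H : ℝ^d → ℝ^d such that H(U) ⊆ V. -/
/-!
Let `P_U`, `P_V` be the orthogonal projections and take `H = P_V P_U + P_{U^⊥}`, which maps `U`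
into `V`. Writing `x = u + w` with `u = P_U x`, `w = P_{U^⊥} x` and `v = P_V u`, one gets
`⟪x, H x⟫ = ‖v‖² + ⟪w, v⟫ + ‖w‖² = (‖v‖² + ‖w‖² + ‖v + w‖²) / 2`, which vanishes only if
`v = w = 0`; then `u ∈ U ∩ V^⊥ = 0`, so `x = 0`.
-/

open RealInnerProductSpace

variable {E : Type*} [NormedAddCommGroup E] [InnerProductSpace ℝ E]

theorem norm_sq_add_real_inner_add_norm_sq_pos {v w : E} (h : v ≠ 0 ∨ w ≠ 0) :
    0 < ‖v‖ ^ 2 + ⟪w, v⟫ + ‖w‖ ^ 2 := by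
  have hsum : 0 < ‖v‖ ^ 2 + ‖w‖ ^ 2 := by
    rcases h with hv | hw
    · have := norm_pos_iff.mpr hv; positivity
    · have := norm_pos_iff.mpr hw; positivity
  have hdouble : 2 * (‖v‖ ^ 2 + ⟪w, v⟫ + ‖w‖ ^ 2) = ‖v‖ ^ 2 + ‖w‖ ^ 2 + ‖w + v‖ ^ 2 := by
    rw [norm_add_sq_real]; ring
  linarith [sq_nonneg ‖w + v‖]

namespace Submodule

theorem real_inner_self_starProjection (K : Submodule ℝ E) [K.HasOrthogonalProjection] (x : E) :
    ⟪x, K.starProjection x⟫ = ‖K.starProjection x‖ ^ 2 := by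
  have hperp : ⟪x - K.starProjection x, K.starProjection x⟫ = 0 :=
    K.starProjection_inner_eq_zero x _ (K.starProjection_apply_mem x)
  rw [inner_sub_left, real_inner_self_eq_norm_sq] at hperp
  linarith

variable (U V : Submodule ℝ E) [U.HasOrthogonalProjection] [V.HasOrthogonalProjection]

noncomputable def starProjectionInto : E →L[ℝ] E :=
  V.starProjection ∘L U.starProjection + Uᗮ.starProjection

theorem starProjectionInto_apply (x : E) :
    U.starProjectionInto V x = V.starProjection (U.starProjection x) + Uᗮ.starProjection x :=
  rfl

theorem map_starProjectionInto_le : U.map (U.starProjectionInto V : E →ₗ[ℝ] E) ≤ V := by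
  rintro _ ⟨x, hx, rfl⟩
  simp only [ContinuousLinearMap.coe_coe, starProjectionInto_apply,
    starProjection_eq_self_iff.mpr hx, starProjection_orthogonal_apply_eq_zero hx, add_zero]
  exact V.starProjection_apply_mem x

theorem real_inner_self_starProjectionInto (x : E) :
    ⟪x, U.starProjectionInto V x⟫ =
      ‖V.starProjection (U.starProjection x)‖ ^ 2 +
        ⟪Uᗮ.starProjection x, V.starProjection (U.starProjection x)⟫ +
        ‖Uᗮ.starProjection x‖ ^ 2 := by
  rw [starProjectionInto_apply]
  set u := U.starProjection x
  set w := Uᗮ.starProjection x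
  have hx : x = u + w := (U.starProjection_add_starProjection_orthogonal x).symm
  have huw : ⟪u, w⟫ = 0 :=
    U.inner_right_of_mem_orthogonal (U.starProjection_apply_mem x)
      (Uᗮ.starProjection_apply_mem x)
  have hww : ⟪w, w⟫ = ‖w‖ ^ 2 := real_inner_self_eq_norm_sq w
  nth_rewrite 1 [hx]
  rw [inner_add_left, inner_add_right, inner_add_right,
    V.real_inner_self_starProjection u, huw, hww]
  ring

theorem real_inner_self_starProjectionInto_pos (h : U ⊓ Vᗮ = ⊥) {x : E} (hx : x ≠ 0) :
    0 < ⟪x, U.starProjectionInto V x⟫ := by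
  rw [real_inner_self_starProjectionInto]
  refine norm_sq_add_real_inner_add_norm_sq_pos ?_
  by_contra! hvw
  obtain ⟨hv, hw⟩ := hvw
  have hu : U.starProjection x ∈ U ⊓ Vᗮ :=
    ⟨U.starProjection_apply_mem x, V.starProjection_apply_eq_zero_iff.mp hv⟩
  rw [h, mem_bot] at hu
  exact hx (by rw [← U.starProjection_add_starProjection_orthogonal x, hu, hw, add_zero])

end Submodule

/-- If `U ∩ V^⊥ = {0}`, there is a positive definite linear map `H` (i.e.
`xᵀHx > 0` for all `x ≠ 0`, not necessarily symmetric) with `H(U) ⊆ V`. -/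
theorem exists_posdef_map_into {d : ℕ}
    (U V : Submodule ℝ (EuclideanSpace ℝ (Fin d)))
    (h : U ⊓ Vᗮ = ⊥) :
    ∃ H : EuclideanSpace ℝ (Fin d) →ₗ[ℝ] EuclideanSpace ℝ (Fin d),
      (∀ x, x ≠ 0 → 0 < (inner ℝ x (H x) : ℝ)) ∧ U.map H ≤ V :=
  ⟨U.starProjectionInto V, fun _ hx ↦ U.real_inner_self_starProjectionInto_pos V h hx,
    U.map_starProjectionInto_le V⟩
end

section
/- Let f₁,…,fₙ : ℝ^d → ℝ be μ-strongly convex and L-Lipschitz smooth (μ·I ⪯ ∇²fᵢ ⪯ L·I), with minimizers xᵢ. Let r = max_{i,j} ‖xᵢ − xⱼ‖₂ and κ = L/μ. Then the diameter of the Pareto set of (f₁,…,fₙ) is at most √κ · r. More precisely, if ‖x − xᵢ‖ > 2√κ · r for some i, then x is not Pareto optimal. -/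
open Finset

def WeakParetoOptimal {ι α : Type*} (f : ι → α → ℝ) (x : α) : Prop :=
  ¬ ∃ y, ∀ i, f i y < f i x

theorem ParetoOptimal.weakParetoOptimal {α : Type*} {n : ℕ} (hn : 0 < n) {f : Fin n → α → ℝ}
    {x : α} (hx : ParetoOptimal f x) : WeakParetoOptimal f x :=
  fun ⟨y, hy⟩ => hx ⟨y, fun i => (hy i).le, ⟨0, hn⟩, hy _⟩

section

variable {ι E : Type*} [Fintype ι]

theorem sum_mul_le_of_mem_stdSimplex {β a : ι → ℝ} {c : ℝ} (hβ : β ∈ stdSimplex ℝ ι)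
    (ha : ∀ i, a i ≤ c) : ∑ i, β i * a i ≤ c :=
  (sum_le_sum fun i _ => mul_le_mul_of_nonneg_left (ha i) (hβ.1 i)).trans_eq
    (by rw [← sum_mul, hβ.2, one_mul])

theorem Convex.exists_mem_stdSimplex_sum_mul_nonneg {S : Set (ι → ℝ)} (hS : Convex ℝ S)
    (hS₀ : 0 ∈ S) (hS_up : ∀ y ∈ S, ∀ y', y ≤ y' → y' ∈ S) (hS_not_neg : ∀ y ∈ S, ∃ i, 0 ≤ y i) :
    ∃ β ∈ stdSimplex ℝ ι, ∀ y ∈ S, 0 ≤ ∑ i, β i * y i := by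
  classical
  set O : Set (ι → ℝ) := Set.univ.pi fun _ => Set.Iio 0
  have hOS : Disjoint O S := Set.disjoint_left.2 fun y hyO hyS => by
    obtain ⟨i, hi⟩ := hS_not_neg y hyS
    exact hi.not_gt (Set.mem_univ_pi.1 hyO i)
  obtain ⟨F, u, hFO, hFS⟩ := geometric_hahn_banach_open (convex_pi fun _ _ => convex_Iio 0)
    (isOpen_set_pi Set.finite_univ fun _ _ => isOpen_Iio) hS hOS
  -- `O` is a cone, so the separating level `u` is also `≥ 0`.
  set v : ι → ℝ := fun _ => -1
  have hvO : ∀ t : ℝ, 0 < t → t • v ∈ O := fun t ht =>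
    Set.mem_univ_pi.2 fun i => by simp [v, ht]
  have hu_nonneg : 0 ≤ u := by
    by_contra! hu
    have hFv : F v < 0 := by simpa using (hFO _ (hvO 1 one_pos)).trans hu
    have := hFO _ (hvO (u / F v) (div_pos_of_neg_of_neg hu hFv))
    rw [map_smul, smul_eq_mul, div_mul_cancel₀ _ hFv.ne] at this
    exact this.false
  obtain rfl : u = 0 := le_antisymm (by simpa using hFS 0 hS₀) hu_nonneg
  set c : ι → ℝ := fun i => F (Pi.single i 1)
  have hF : ∀ y, F y = ∑ i, y i * c i := fun y => by
    conv_lhs => rw [pi_eq_sum_univ' y]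
    simp [c]
  have hc_nonneg : ∀ i, 0 ≤ c i := fun i =>
    hFS _ (hS_up 0 hS₀ _ (Pi.single_nonneg.2 zero_le_one))
  have hc_pos : 0 < ∑ i, c i := by simpa [hF, v] using hFO v (one_smul ℝ v ▸ hvO 1 one_pos)
  refine ⟨fun i => c i / ∑ j, c j, ⟨fun i => div_nonneg (hc_nonneg i) hc_pos.le, ?_⟩,
    fun y hy => ?_⟩
  · rw [← sum_div, div_self hc_pos.ne']
  · simp only [div_eq_inv_mul, mul_assoc, ← mul_sum]
    exact mul_nonneg (inv_nonneg.2 hc_pos.le) (by simpa [hF, mul_comm] using hFS y hy)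

theorem WeakParetoOptimal.exists_mem_stdSimplex_isMinOn [AddCommGroup E] [Module ℝ E]
    {f : ι → E → ℝ} (hf : ∀ i, ConvexOn ℝ Set.univ (f i)) {p : E}
    (hp : WeakParetoOptimal f p) :
    ∃ β ∈ stdSimplex ℝ ι, IsMinOn (fun z => ∑ i, β i * f i z) Set.univ p := by
  set S : Set (ι → ℝ) := {y | ∃ z, ∀ i, f i z - f i p ≤ y i}
  have hS : Convex ℝ S := by
    rintro y₁ ⟨z₁, hz₁⟩ y₂ ⟨z₂, hz₂⟩ a b ha hb hab
    refine ⟨a • z₁ + b • z₂, fun i => ?_⟩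
    have := (hf i).2 (Set.mem_univ z₁) (Set.mem_univ z₂) ha hb hab
    simp only [smul_eq_mul, Pi.add_apply, Pi.smul_apply] at this ⊢
    have hfp : a * f i p + b * f i p = f i p := by rw [← add_mul, hab, one_mul]
    nlinarith [mul_le_mul_of_nonneg_left (hz₁ i) ha, mul_le_mul_of_nonneg_left (hz₂ i) hb]
  have hS_not_neg : ∀ y ∈ S, ∃ i, 0 ≤ y i := fun y ⟨z, hz⟩ => by
    by_contra! hneg
    exact hp ⟨z, fun i => by linarith [hz i, hneg i]⟩
  obtain ⟨β, hβ, hβS⟩ := hS.exists_mem_stdSimplex_sum_mul_nonneg ⟨p, fun i => by simp⟩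
    (fun y ⟨z, hz⟩ y' hyy' => ⟨z, fun i => (hz i).trans (hyy' i)⟩) hS_not_neg
  refine ⟨β, hβ, fun z _ => ?_⟩
  have := hβS _ ⟨z, fun i => le_rfl⟩
  simp only [mul_sub, sum_sub_distrib, sub_nonneg] at this
  exact this

theorem strongConvexOn_sum_mul [NormedAddCommGroup E] [NormedSpace ℝ E] {s : Set E} {m : ℝ}
    {f : ι → E → ℝ} (hf : ∀ i, StrongConvexOn s m (f i)) {β : ι → ℝ}
    (hβ : β ∈ stdSimplex ℝ ι) : StrongConvexOn s m fun x => ∑ i, β i * f i x := by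
  obtain ⟨i₀, -, -⟩ := exists_ne_zero_of_sum_ne_zero (hβ.2.symm ▸ one_ne_zero : ∑ i, β i ≠ 0)
  refine ⟨(hf i₀).1, fun x hx y hy a b ha hb hab => ?_⟩
  calc ∑ i, β i * f i (a • x + b • y)
      ≤ ∑ i, β i * (a * f i x + b * f i y - a * b * (m / 2 * ‖x - y‖ ^ 2)) :=
        sum_le_sum fun i _ => mul_le_mul_of_nonneg_left ((hf i).2 hx hy ha hb hab) (hβ.1 i)
    _ = a • ∑ i, β i * f i x + b • ∑ i, β i * f i y - a * b * (m / 2 * ‖x - y‖ ^ 2) := by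
        simp only [smul_eq_mul, mul_sub, mul_add, sum_sub_distrib, sum_add_distrib, mul_sum]
        rw [← sum_mul, hβ.2]
        simp only [mul_left_comm]
        ring

theorem StrongConvexOn.add_mul_norm_sub_sq_le_of_isMinOn [NormedAddCommGroup E]
    [NormedSpace ℝ E] {s : Set E} {m : ℝ} {f : E → ℝ} (hf : StrongConvexOn s m f) {p z : E}
    (hp : p ∈ s) (hz : z ∈ s) (hmin : IsMinOn f s p) :
    f p + m / 2 * ‖z - p‖ ^ 2 ≤ f z := by
  have hseg : ∀ t ∈ Set.Ioo (0 : ℝ) 1, f p + (1 - t) * (m / 2 * ‖z - p‖ ^ 2) ≤ f z := by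
    rintro t ⟨ht₀, ht₁⟩
    have hconv := hf.2 hp hz (sub_nonneg.2 ht₁.le) ht₀.le (sub_add_cancel 1 t)
    have hle := hmin (hf.1 hp hz (sub_nonneg.2 ht₁.le) ht₀.le (sub_add_cancel 1 t))
    simp only [smul_eq_mul, norm_sub_rev p z, Set.mem_ofPred_eq] at hconv hle
    refine le_of_mul_le_mul_left ?_ ht₀
    linarith
  refine le_of_tendsto ?_ (Filter.eventually_of_mem (Ioo_mem_nhdsGT one_pos) hseg)
  exact (Continuous.tendsto' (by fun_prop) 0 _ (by simp)).mono_left nhdsWithin_le_nhds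

section WeightedMean

variable [NormedAddCommGroup E] [InnerProductSpace ℝ E]

def weightedMean (β : ι → ℝ) (x : ι → E) : E := ∑ i, β i • x i

def weightedVariance (β : ι → ℝ) (x : ι → E) : ℝ := ∑ i, β i * ‖weightedMean β x - x i‖ ^ 2

theorem weightedVariance_nonneg {β : ι → ℝ} (hβ : β ∈ stdSimplex ℝ ι) (x : ι → E) :
    0 ≤ weightedVariance β x :=
  sum_nonneg fun i _ => mul_nonneg (hβ.1 i) (sq_nonneg _)

theorem sum_mul_norm_sub_sq {β : ι → ℝ} (hβ : ∑ i, β i = 1) (x : ι → E) (c : E) :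
    ∑ i, β i * ‖c - x i‖ ^ 2 = ‖c - weightedMean β x‖ ^ 2 + weightedVariance β x := by
  set m := weightedMean β x
  have hcentered : ∑ i, β i • (m - x i) = 0 := by
    simp [m, weightedMean, smul_sub, sum_sub_distrib, ← sum_smul, hβ]
  calc ∑ i, β i * ‖c - x i‖ ^ 2
      = ∑ i, (β i * ‖c - m‖ ^ 2 + 2 * inner ℝ (c - m) (β i • (m - x i))
          + β i * ‖m - x i‖ ^ 2) := sum_congr rfl fun i _ => by
        rw [← sub_add_sub_cancel c m (x i), norm_add_sq_real, real_inner_smul_right]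
        ring
    _ = ‖c - m‖ ^ 2 + weightedVariance β x := by
        rw [sum_add_distrib, sum_add_distrib, ← sum_mul, hβ, ← mul_sum, ← inner_sum, hcentered]
        simp [weightedVariance, m]

theorem sum_mul_sum_mul_norm_sub_sq {β γ : ι → ℝ} (hβ : ∑ i, β i = 1) (hγ : ∑ i, γ i = 1)
    (x : ι → E) :
    ∑ i, β i * ∑ j, γ j * ‖x i - x j‖ ^ 2 = weightedVariance β x + weightedVariance γ x
      + ‖weightedMean β x - weightedMean γ x‖ ^ 2 := by
  simp only [sum_mul_norm_sub_sq hγ, mul_add, sum_add_distrib, ← sum_mul, hβ, one_mul]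
  simp_rw [norm_sub_rev (x _) (weightedMean γ x)]
  rw [sum_mul_norm_sub_sq hβ, norm_sub_rev]
  ring

theorem weightedVariance_add_weightedVariance_add_norm_sub_sq_le {β γ : ι → ℝ}
    (hβ : β ∈ stdSimplex ℝ ι) (hγ : γ ∈ stdSimplex ℝ ι) {x : ι → E} {r : ℝ}
    (hx : ∀ i j, ‖x i - x j‖ ≤ r) :
    weightedVariance β x + weightedVariance γ x
      + ‖weightedMean β x - weightedMean γ x‖ ^ 2 ≤ r ^ 2 := by
  rw [← sum_mul_sum_mul_norm_sub_sq hβ.2 hγ.2]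
  exact sum_mul_le_of_mem_stdSimplex hβ fun i => sum_mul_le_of_mem_stdSimplex hγ fun j =>
    pow_le_pow_left₀ (norm_nonneg _) (hx i j) 2

theorem two_mul_mul_norm_sub_weightedMean_sq_le {μ L : ℝ} {f : ι → E → ℝ} {xmin : ι → E}
    (hsc : ∀ i x, f i (xmin i) + μ / 2 * ‖x - xmin i‖ ^ 2 ≤ f i x)
    (hsm : ∀ i x, f i x ≤ f i (xmin i) + L / 2 * ‖x - xmin i‖ ^ 2)
    {β : ι → ℝ} (hβ : β ∈ stdSimplex ℝ ι) {p : E}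
    (hgrowth : ∀ z, ∑ i, β i * f i p + μ / 2 * ‖z - p‖ ^ 2 ≤ ∑ i, β i * f i z) :
    2 * μ * ‖p - weightedMean β xmin‖ ^ 2 ≤ (L - μ) * weightedVariance β xmin := by
  set m := weightedMean β xmin
  have hp : ∑ i, β i * (f i (xmin i) + μ / 2 * ‖p - xmin i‖ ^ 2) ≤ ∑ i, β i * f i p :=
    sum_le_sum fun i _ => mul_le_mul_of_nonneg_left (hsc i p) (hβ.1 i)
  have hm : ∑ i, β i * f i m ≤ ∑ i, β i * (f i (xmin i) + L / 2 * ‖m - xmin i‖ ^ 2) :=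
    sum_le_sum fun i _ => mul_le_mul_of_nonneg_left (hsm i m) (hβ.1 i)
  simp only [mul_add, sum_add_distrib, mul_left_comm (β _), ← mul_sum] at hp hm
  rw [sum_mul_norm_sub_sq hβ.2] at hp hm
  have := hgrowth m
  rw [norm_sub_rev m p, sub_self, norm_zero] at *
  linarith

end WeightedMean

end

theorem mul_add_add_sq_le {μ L P Q W A B : ℝ} (hμ : 0 < μ) (hLμ : μ ≤ L) (hA : 0 ≤ A)
    (hB : 0 ≤ B) (hP : 2 * μ * P ^ 2 ≤ (L - μ) * A) (hQ : 2 * μ * Q ^ 2 ≤ (L - μ) * B) :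
    μ * (P + W + Q) ^ 2 ≤ L * (A + B + W ^ 2) := by
  rcases hLμ.eq_or_lt with rfl | hlt
  · rw [sub_self, zero_mul] at hP hQ
    have hP0 : P = 0 := pow_eq_zero_iff two_ne_zero |>.1 <| by nlinarith [sq_nonneg P]
    have hQ0 : Q = 0 := pow_eq_zero_iff two_ne_zero |>.1 <| by nlinarith [sq_nonneg Q]
    subst hP0 hQ0
    nlinarith
  · refine le_of_mul_le_mul_left ?_ (sub_pos.2 hlt)
    -- Cauchy–Schwarz for `P + W + Q` with weights adapted to the bounds on `P` and `Q`.
    nlinarith [mul_le_mul_of_nonneg_left hP (hμ.trans hlt).le,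
      mul_le_mul_of_nonneg_left hQ (hμ.trans hlt).le, mul_nonneg hμ.le (sub_pos.2 hlt).le,
      mul_nonneg (mul_nonneg hμ.le (sub_pos.2 hlt).le) (sq_nonneg (P - Q)),
      sq_nonneg (2 * μ * P - (L - μ) * W), sq_nonneg (2 * μ * Q - (L - μ) * W)]

theorem le_sqrt_div_mul_iff {μ L r a : ℝ} (hμ : 0 < μ) (hL : 0 ≤ L) (hr : 0 ≤ r) (ha : 0 ≤ a) :
    a ≤ √(L / μ) * r ↔ μ * a ^ 2 ≤ L * r ^ 2 := by
  have : √(L / μ) * r = √(L / μ * r ^ 2) := by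
    rw [Real.sqrt_mul (div_nonneg hL hμ.le), Real.sqrt_sq hr]
  rw [this, Real.le_sqrt ha (by positivity), div_mul_eq_mul_div, le_div_iff₀ hμ, mul_comm]

variable {n : ℕ} {E : Type*}

theorem ParetoOptimal.exists_mem_stdSimplex_two_mul_mul_norm_sub_weightedMean_sq_le
    [NormedAddCommGroup E] [InnerProductSpace ℝ E] (hn : 0 < n) {μ L : ℝ} (hμ : 0 ≤ μ)
    {f : Fin n → E → ℝ} {xmin : Fin n → E} (hconv : ∀ i, StrongConvexOn Set.univ μ (f i))
    (hsc : ∀ i x, f i (xmin i) + μ / 2 * ‖x - xmin i‖ ^ 2 ≤ f i x)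
    (hsm : ∀ i x, f i x ≤ f i (xmin i) + L / 2 * ‖x - xmin i‖ ^ 2) {p : E}
    (hp : ParetoOptimal f p) :
    ∃ β ∈ stdSimplex ℝ (Fin n),
      2 * μ * ‖p - weightedMean β xmin‖ ^ 2 ≤ (L - μ) * weightedVariance β xmin := by
  obtain ⟨β, hβ, hmin⟩ := (hp.weakParetoOptimal hn).exists_mem_stdSimplex_isMinOn fun i =>
    (hconv i).convexOn fun r => by simp only [Pi.zero_apply]; positivity
  refine ⟨β, hβ, two_mul_mul_norm_sub_weightedMean_sq_le hsc hsm hβ fun z => ?_⟩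
  exact (strongConvexOn_sum_mul hconv hβ).add_mul_norm_sub_sq_le_of_isMinOn
    (Set.mem_univ p) (Set.mem_univ z) hmin

theorem ParetoOptimal.norm_sub_le [NormedAddCommGroup E] [InnerProductSpace ℝ E] (hn : 0 < n)
    {μ L r : ℝ} (hμ : 0 < μ) (hLμ : μ ≤ L) (hr : 0 ≤ r) {f : Fin n → E → ℝ}
    {xmin : Fin n → E} (hconv : ∀ i, StrongConvexOn Set.univ μ (f i))
    (hsc : ∀ i x, f i (xmin i) + μ / 2 * ‖x - xmin i‖ ^ 2 ≤ f i x)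
    (hsm : ∀ i x, f i x ≤ f i (xmin i) + L / 2 * ‖x - xmin i‖ ^ 2)
    (hdist : ∀ i j, ‖xmin i - xmin j‖ ≤ r) {p q : E} (hp : ParetoOptimal f p)
    (hq : ParetoOptimal f q) : ‖p - q‖ ≤ √(L / μ) * r := by
  obtain ⟨β, hβ, hpβ⟩ :=
    hp.exists_mem_stdSimplex_two_mul_mul_norm_sub_weightedMean_sq_le hn hμ.le hconv hsc hsm
  obtain ⟨γ, hγ, hqγ⟩ :=
    hq.exists_mem_stdSimplex_two_mul_mul_norm_sub_weightedMean_sq_le hn hμ.le hconv hsc hsm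
  set mβ := weightedMean β xmin
  set mγ := weightedMean γ xmin
  have htri : ‖p - q‖ ≤ ‖p - mβ‖ + ‖mβ - mγ‖ + ‖q - mγ‖ := by
    calc ‖p - q‖ ≤ ‖p - mβ‖ + ‖mβ - q‖ := norm_sub_le_norm_sub_add_norm_sub p mβ q
      _ ≤ ‖p - mβ‖ + (‖mβ - mγ‖ + ‖mγ - q‖) := by
          gcongr; exact norm_sub_le_norm_sub_add_norm_sub mβ mγ q
      _ = ‖p - mβ‖ + ‖mβ - mγ‖ + ‖q - mγ‖ := by rw [norm_sub_rev mγ q, add_assoc]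
  have hL : 0 ≤ L := hμ.le.trans hLμ
  refine htri.trans ((le_sqrt_div_mul_iff hμ hL hr (by positivity)).2 ?_)
  calc μ * (‖p - mβ‖ + ‖mβ - mγ‖ + ‖q - mγ‖) ^ 2
      ≤ L * (weightedVariance β xmin + weightedVariance γ xmin + ‖mβ - mγ‖ ^ 2) :=
        mul_add_add_sq_le hμ hLμ (weightedVariance_nonneg hβ xmin)
          (weightedVariance_nonneg hγ xmin) hpβ hqγ
    _ ≤ L * r ^ 2 := mul_le_mul_of_nonneg_left
        (weightedVariance_add_weightedVariance_add_norm_sub_sq_le hβ hγ hdist) hL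

theorem ParetoOptimal.norm_sub_minimizer_le [NormedAddCommGroup E] {μ L r : ℝ} (hμ : 0 < μ)
    (hLμ : μ ≤ L) (hr : 0 ≤ r) {f : Fin n → E → ℝ} {xmin : Fin n → E}
    (hsc : ∀ i x, f i (xmin i) + μ / 2 * ‖x - xmin i‖ ^ 2 ≤ f i x)
    (hsm : ∀ i x, f i x ≤ f i (xmin i) + L / 2 * ‖x - xmin i‖ ^ 2)
    (hdist : ∀ i j, ‖xmin i - xmin j‖ ≤ r) {x : E} (hx : ParetoOptimal f x) (i : Fin n) :
    ‖x - xmin i‖ ≤ 2 * √(L / μ) * r := by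
  by_contra! hfar
  have hκ : 1 ≤ √(L / μ) := Real.one_le_sqrt.2 ((one_le_div hμ).2 hLμ)
  have hdominates : ∀ j, f j (xmin i) < f j x := fun j => by
    have hfar_j : √(L / μ) * r < ‖x - xmin j‖ := by
      nlinarith [norm_sub_le_norm_sub_add_norm_sub x (xmin j) (xmin i), hdist j i]
    rw [lt_iff_not_ge, le_sqrt_div_mul_iff hμ (hμ.le.trans hLμ) hr (norm_nonneg _), not_le]
      at hfar_j
    nlinarith [hsc j x, hsm j (xmin i), pow_le_pow_left₀ (norm_nonneg _) (hdist i j) 2]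
  exact hx ⟨xmin i, fun j => (hdominates j).le, i, hdominates i⟩

theorem pareto_diam_le_general {d n : ℕ} (hn : 0 < n) (μ L r : ℝ) (hμ : 0 < μ) (hLμ : μ ≤ L)
    (hr : 0 ≤ r)
    (f : Fin n → EuclideanSpace ℝ (Fin d) → ℝ)
    (xmin : Fin n → EuclideanSpace ℝ (Fin d))
    (hconv : ∀ i, StrongConvexOn Set.univ μ (f i))
    (hsc : ∀ i x, f i (xmin i) + μ / 2 * ‖x - xmin i‖ ^ 2 ≤ f i x)
    (hsm : ∀ i x, f i x ≤ f i (xmin i) + L / 2 * ‖x - xmin i‖ ^ 2)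
    (hdist : ∀ i j, ‖xmin i - xmin j‖ ≤ r) :
    (∀ p q, ParetoOptimal f p → ParetoOptimal f q →
      ‖p - q‖ ≤ Real.sqrt (L / μ) * r) ∧
    (∀ x i, 2 * Real.sqrt (L / μ) * r < ‖x - xmin i‖ → ¬ ParetoOptimal f x) :=
  ⟨fun _ _ hp hq => hp.norm_sub_le hn hμ hLμ hr hconv hsc hsm hdist hq,
    fun _ i hfar hx => hfar.not_ge (hx.norm_sub_minimizer_le hμ hLμ hr hsc hsm hdist i)⟩

/-- Size of the Pareto set: for `μ`-strongly convex, `L`-Lipschitz-smooth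
objectives with minimizers `xmin i` at pairwise distance at most `r`, the
Pareto set has diameter at most `√(L/μ) · r`; more precisely, any point at
distance more than `2√(L/μ) · r` from some minimizer is not Pareto optimal. -/
theorem pareto_diam_le {d n : ℕ} (hn : 0 < n) (μ L r : ℝ) (hμ : 0 < μ) (hLμ : μ ≤ L)
    (hr : 0 ≤ r)
    (f : Fin n → EuclideanSpace ℝ (Fin d) → ℝ)
    (xmin : Fin n → EuclideanSpace ℝ (Fin d))
    (hmin : ∀ i, IsMinOn (f i) Set.univ (xmin i))
    (hconv : ∀ i, StrongConvexOn Set.univ μ (f i))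
    (hsc : ∀ i x, f i (xmin i) + μ / 2 * ‖x - xmin i‖ ^ 2 ≤ f i x)
    (hsm : ∀ i x, f i x ≤ f i (xmin i) + L / 2 * ‖x - xmin i‖ ^ 2)
    (hdist : ∀ i j, ‖xmin i - xmin j‖ ≤ r) :
    (∀ p q, ParetoOptimal f p → ParetoOptimal f q →
      ‖p - q‖ ≤ Real.sqrt (L / μ) * r) ∧
    (∀ x i, 2 * Real.sqrt (L / μ) * r < ‖x - xmin i‖ → ¬ ParetoOptimal f x) :=
  pareto_diam_le_general hn μ L r hμ hLμ hr f xmin hconv hsc hsm hdist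
end

section
/- Let C ⊆ ℝⁿ be convex, β ∈ C, and let Q(β') = c + vᵀ(β' − β) + ½C₀‖β' − β‖² be a quadratic with C₀ > 0. If β* ∈ C minimizes Q over C and ‖β* − β‖ ≥ ε > 0, then Q(β*) − Q(β) ≤ −½C₀ε². -/
open RealInnerProductSpace

/-- Descent for the minimizer of a quadratic over a convex set: if
`Q(β') = c + vᵀ(β'−β) + ½C₀‖β'−β‖²` with `C₀ > 0`, `β* ∈ C` minimizes `Q`
over the convex set `C ∋ β`, and `‖β* − β‖ ≥ ε > 0`, then
`Q(β*) − Q(β) ≤ −½C₀ε²`. -/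
theorem quadratic_min_descent {n : ℕ} (C : Set (EuclideanSpace ℝ (Fin n)))
    (hC : Convex ℝ C) (β : EuclideanSpace ℝ (Fin n)) (hβ : β ∈ C)
    (c : ℝ) (v : EuclideanSpace ℝ (Fin n)) (C₀ : ℝ) (hC₀ : 0 < C₀)
    (Q : EuclideanSpace ℝ (Fin n) → ℝ)
    (hQ : ∀ β', Q β' = c + ⟪v, β' - β⟫ + (1 / 2) * C₀ * ‖β' - β‖ ^ 2)
    (βs : EuclideanSpace ℝ (Fin n)) (hβs : βs ∈ C)
    (hmin : IsMinOn Q C βs)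
    (ε : ℝ) (hε : 0 < ε) (hdist : ε ≤ ‖βs - β‖) :
    Q βs - Q β ≤ -(1 / 2) * C₀ * ε ^ 2 := by
  set d := βs - β with hd
  set D := ‖d‖ with hD
  set a : ℝ := ⟪v, d⟫ with ha
  have hDpos : 0 < D := lt_of_lt_of_le hε hdist
  have key : ∀ t : ℝ, 0 ≤ t → t ≤ 1 →
      a + (1/2)*C₀*D^2 ≤ t*a + (1/2)*C₀*t^2*D^2 := by
    intro t ht0 ht1
    have hmem : β + t • d ∈ C := by
      have h := hC hβ hβs (by linarith : (0:ℝ) ≤ 1 - t) ht0 (by ring)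
      have heq : (1 - t) • β + t • βs = β + t • d := by
        rw [hd]; module
      rwa [heq] at h
    have hle := hmin hmem
    simp only [Set.mem_setOf_eq] at hle
    rw [hQ, hQ] at hle
    have h1 : β + t • d - β = t • d := by abel
    rw [h1, ← hd, inner_smul_right, norm_smul, Real.norm_eq_abs,
      abs_of_nonneg ht0, mul_pow] at hle
    rw [ha, hD]
    nlinarith [hle]
  have hkey2 : ∀ t : ℝ, 0 ≤ t → t < 1 → a ≤ -(1/2)*C₀*(1+t)*D^2 := by
    intro t ht0 ht1
    have h := key t ht0 ht1.le
    nlinarith [h]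
  have goal' : a + (1/2)*C₀*D^2 ≤ -(1/2)*C₀*ε^2 := by
    apply le_of_forall_pos_le_add
    intro δ hδ
    have hD2 : (0:ℝ) < D^2 := by positivity
    rcases le_or_gt (ε^2/D^2) (1 - δ/(C₀*D^2)) with h | h
    · have ht1 : ε^2/D^2 < 1 := by
        have : 0 < δ/(C₀*D^2) := by positivity
        linarith
      have := hkey2 (ε^2/D^2) (by positivity) ht1
      have hexp : -(1/2)*C₀*(1+ε^2/D^2)*D^2 = -(1/2)*C₀*D^2 - (1/2)*C₀*ε^2 := by
        field_simp; ring
      rw [hexp] at this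
      linarith
    · rcases le_or_gt 0 (1 - δ/(C₀*D^2)) with h0 | h0
      · have ht1 : 1 - δ/(C₀*D^2) < 1 := by
          have : 0 < δ/(C₀*D^2) := by positivity
          linarith
        have := hkey2 (1 - δ/(C₀*D^2)) h0 ht1
        have hexp : -(1/2)*C₀*(1+(1 - δ/(C₀*D^2)))*D^2 = -C₀*D^2 + δ/2 := by
          field_simp; ring
        rw [hexp] at this
        have hDe : ε^2 ≤ D^2 := by nlinarith
        nlinarith
      · have h0' : C₀*D^2 < δ := by
          have hC0D : 0 < C₀*D^2 := by positivity
          rw [sub_neg] at h0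
          exact (one_lt_div hC0D).mp h0
        have := key 0 le_rfl zero_le_one
        have hDe : ε^2 ≤ D^2 := by nlinarith
        nlinarith
  have hQβs : Q βs = c + a + (1/2)*C₀*D^2 := by
    rw [hQ]
  have hQβ : Q β = c := by
    rw [hQ]; simp
  rw [hQβs, hQβ]
  have hεD : ε^2 ≤ D^2 := by nlinarith
  linarith
end
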